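/- arXiv:1303.1854 — 2 statements merged into one kernel-verified Lean document; each statement's English description precedes it below -/
import Mathlib

section
/- If x_1 ≤ x_2 ≤ … ≤ x_N are real numbers in [0,1], then their star-discrepancy equals D_N* = 1/(2N) + max_{i=1,…,N} |x_i − (2i−1)/(2N)|. -/
/-!
For sorted points, `#{j | x j < a}` is at most `i` when `a ≤ x i` and at least `i + 1` when
`x i < a`. So each local discrepancy `|#{j | x j < a} / N - a|` is bounded by
`max (x i - i / N) ((i + 1) / N - x i)` for a suitable `i`, and conversely the first value is
attained at `a = x i` and the second approached as `a ↓ x i`. Finally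
`max (x i - i / N) ((i + 1) / N - x i) = 1 / (2N) + |x i - (2i + 1) / (2N)|`.
-/

open Finset

section Counting

variable {α : Type*} [Preorder α] [DecidableLT α] {N : ℕ} {x : Fin N → α} {a : α}
  {i : Fin N}

theorem Monotone.card_filter_lt_le (hx : Monotone x) (h : a ≤ x i) :
    #{j | x j < a} ≤ i :=
  calc #{j | x j < a} ≤ #(Iio i) := card_le_card fun _ hj =>
        mem_Iio.2 <| lt_of_not_ge fun hij => (h.trans (hx hij)).not_gt (mem_filter.1 hj).2
    _ = i := Fin.card_Iio i

theorem Monotone.lt_card_filter_lt (hx : Monotone x) (h : x i < a) :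
    (i : ℕ) < #{j | x j < a} :=
  calc (i : ℕ) < #(Iic i) := by rw [Fin.card_Iic]; exact Nat.lt_succ_self _
    _ ≤ #{j | x j < a} := card_le_card fun j hj =>
        mem_filter.2 ⟨mem_univ j, (hx (mem_Iic.1 hj)).trans_lt h⟩

end Counting

theorem add_abs_sub_eq_max {α : Type*} [AddCommGroup α] [LinearOrder α] [IsOrderedAddMonoid α]
    (h c y : α) : h + |y - c| = max (y - (c - h)) (c + h - y) := by
  rw [abs_eq_max_neg, add_max]
  congr 1 <;> abel

theorem one_div_two_mul_add_abs_sub_eq_max {N : ℝ} (hN : N ≠ 0) (i y : ℝ) :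
    1 / (2 * N) + |y - (2 * i + 1) / (2 * N)| = max (y - i / N) ((i + 1) / N - y) := by
  rw [add_abs_sub_eq_max]
  congr 2 <;> field_simp <;> ring

section LocalDiscrepancy

variable {N : ℕ} {x : Fin N → ℝ} {a b : ℝ}

/-- `|A([0,a); N) / N - a|`: for points in `[0, 1]`, `x j ∈ [0, a)` is just `x j < a`. -/
noncomputable def localDiscrepancy (x : Fin N → ℝ) (a : ℝ) : ℝ :=
  |(#{j | x j < a} : ℝ) / N - a|

theorem Monotone.exists_localDiscrepancy_le_max (hN : 0 < N) (hx : Monotone x) (ha0 : 0 < a)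
    (ha1 : a ≤ 1) :
    ∃ i : Fin N, localDiscrepancy x a ≤ max (x i - i / N) ((i + 1) / N - x i) := by
  have hN' : (0 : ℝ) < N := Nat.cast_pos.2 hN
  set k := #{j | x j < a} with hk
  have hkN : k ≤ N := (card_filter_le _ _).trans_eq (card_fin N)
  rcases le_or_gt a (k / N) with hak | hka
  · have hk0 : 0 < k := Nat.pos_of_ne_zero fun h0 => by
      rw [h0, Nat.cast_zero, zero_div] at hak
      linarith
    let i : Fin N := ⟨k - 1, by omega⟩
    have hxi : x i < a := lt_of_not_ge fun h => by
      have := hx.card_filter_lt_le h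
      simp only [i, ← hk] at this
      omega
    have hik : (i : ℝ) + 1 = k := by
      simp only [i]
      push_cast [Nat.one_le_iff_ne_zero.2 hk0.ne']
      ring
    refine ⟨i, le_max_of_le_right ?_⟩
    rw [localDiscrepancy, ← hk, abs_of_nonneg (sub_nonneg.2 hak), hik]
    linarith
  · have hkN' : k < N := lt_of_le_of_ne hkN fun h => by
      rw [h, div_self hN'.ne'] at hka
      linarith
    let i : Fin N := ⟨k, hkN'⟩
    have hxi : a ≤ x i := le_of_not_gt fun h => (hx.lt_card_filter_lt h).false
    refine ⟨i, le_max_of_le_left ?_⟩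
    rw [localDiscrepancy, ← hk, abs_of_neg (sub_neg.2 hka)]
    simp only [i]
    linarith

theorem Monotone.sub_div_le_of_localDiscrepancy_le (hx : Monotone x) {i : Fin N} (hxi : x i ≤ 1)
    (hb : ∀ a ∈ Set.Ioc 0 1, localDiscrepancy x a ≤ b) : x i - i / N ≤ b := by
  by_cases h : (i : ℝ) / N < x i
  · have hcard : (#{j | x j < x i} : ℝ) / N ≤ i / N := by
      gcongr
      exact_mod_cast hx.card_filter_lt_le le_rfl
    calc x i - i / N ≤ |(#{j | x j < x i} : ℝ) / N - x i| := by
          rw [abs_sub_comm]; exact le_abs.2 (Or.inl (by linarith))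
      _ ≤ b := hb (x i) ⟨(div_nonneg i.val.cast_nonneg N.cast_nonneg).trans_lt h, hxi⟩
  · exact (sub_nonpos.2 (not_lt.1 h)).trans ((abs_nonneg _).trans (hb 1 ⟨one_pos, le_rfl⟩))

theorem Monotone.add_one_div_sub_le_of_localDiscrepancy_le (hx : Monotone x) {i : Fin N}
    (hxi : 0 ≤ x i) (hb : ∀ a ∈ Set.Ioc 0 1, localDiscrepancy x a ≤ b) :
    (i + 1) / N - x i ≤ b := by
  by_cases h : x i < 1
  · refine le_of_forall_sub_le fun ε hε => ?_
    set a := min (x i + ε) 1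
    have hxa : x i < a := lt_min (by linarith) h
    have hcard : ((i : ℝ) + 1) / N ≤ (#{j | x j < a} : ℝ) / N := by
      gcongr
      exact_mod_cast hx.lt_card_filter_lt hxa
    calc (i + 1) / N - x i - ε ≤ (#{j | x j < a} : ℝ) / N - a := by
          linarith [min_le_left (x i + ε) 1]
      _ ≤ b := (le_abs_self _).trans (hb a ⟨hxi.trans_lt hxa, min_le_right _ _⟩)
  · have hN : (0 : ℝ) < N := Nat.cast_pos.2 i.pos
    have hi : ((i : ℝ) + 1) / N ≤ 1 := (div_le_one hN).2 (by exact_mod_cast i.isLt)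
    linarith [(abs_nonneg _).trans (hb 1 ⟨one_pos, le_rfl⟩)]

end LocalDiscrepancy

/-- If `x 0 ≤ x 1 ≤ … ≤ x (N-1)` are reals in `[0,1]`, then their
star-discrepancy is `D_N* = 1/(2N) + max_{i=1,…,N} |x_i − (2i−1)/(2N)|`
(here the `i`-th point, `1 ≤ i ≤ N`, corresponds to the index `i-1 : Fin N`,
so `2i − 1 = 2(i-1) + 1`). -/
theorem star_discrepancy_of_sorted
    (N : ℕ) (hN : 0 < N) (x : Fin N → ℝ)
    (hx : ∀ j, x j ∈ Set.Icc (0 : ℝ) 1) (hmono : Monotone x) :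
    sSup {t : ℝ | ∃ a : ℝ, 0 < a ∧ a ≤ 1 ∧
        t = |((Finset.univ.filter (fun j => x j ∈ Set.Ico 0 a)).card : ℝ) / (N : ℝ) - a|}
      = 1 / (2 * N)
        + (Finset.univ.sup' (Finset.univ_nonempty_iff.mpr ⟨⟨0, hN⟩⟩)
            fun i : Fin N => |x i - (2 * (i : ℝ) + 1) / (2 * N)|) := by
  have hN' : (N : ℝ) ≠ 0 := by positivity
  simp only [Set.mem_Ico, fun j => (hx j).1, true_and]
  change sSup {t | ∃ a, 0 < a ∧ a ≤ 1 ∧ t = localDiscrepancy x a} = _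
  refine IsLUB.csSup_eq ⟨?_, fun b hb => ?_⟩ ⟨_, 1, one_pos, le_rfl, rfl⟩
  · rintro _ ⟨a, ha0, ha1, rfl⟩
    obtain ⟨i, hi⟩ := hmono.exists_localDiscrepancy_le_max hN ha0 ha1
    rw [← one_div_two_mul_add_abs_sub_eq_max hN'] at hi
    exact hi.trans (by
      gcongr
      exact le_sup' (fun i : Fin N => |x i - (2 * (i : ℝ) + 1) / (2 * N)|) (mem_univ i))
  · have hb' : ∀ a ∈ Set.Ioc 0 1, localDiscrepancy x a ≤ b := fun a ha =>
      hb ⟨a, ha.1, ha.2, rfl⟩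
    refine le_sub_iff_add_le'.1 (sup'_le _ _ fun i _ => le_sub_iff_add_le'.2 ?_)
    rw [one_div_two_mul_add_abs_sub_eq_max hN']
    exact max_le (hmono.sub_div_le_of_localDiscrepancy_le (hx i).2 hb')
      (hmono.add_one_div_sub_le_of_localDiscrepancy_le (hx i).1 hb')
end

section
/- Let ν ∈ S^{n−1} be an irrational direction (ν ∉ ℝℤⁿ), and H(x_0) = {x ∈ ℝⁿ : (x − x_0)·ν = 0}. Then for any δ > 0 there exists z ∈ ℤⁿ with dist(z, H(x_0)) ≤ δ; that is, the integer lattice comes arbitrarily close to every hyperplane with irrational normal. -/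
/-! The values `∑ zᵢ νᵢ` with `z ∈ ℤⁿ` form the additive subgroup of `ℝ` generated by the
coordinates of `ν`. A subgroup of `ℝ` is either dense or cyclic, and if it were cyclic, generated
by `a`, then `a⁻¹ ν` (or `ν` itself when `a = 0`) would be an integer vector. So these values are
dense, and one of them lies within `δ` of `x₀ · ν`. -/

open AddSubgroup

lemma exists_ne_zero_forall_mul_eq_int_of_mem_zmultiples {ι : Type*} {ν : ι → ℝ} {a : ℝ}
    (h : ∀ i, ν i ∈ zmultiples a) : ∃ t : ℝ, t ≠ 0 ∧ ∀ i, ∃ z : ℤ, t * ν i = z := by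
  obtain rfl | ha := eq_or_ne a 0
  · exact ⟨1, one_ne_zero, fun i => ⟨0, by simpa using h i⟩⟩
  · refine ⟨a⁻¹, inv_ne_zero ha, fun i => ?_⟩
    obtain ⟨m, hm⟩ := mem_zmultiples_iff.mp (h i)
    exact ⟨m, by rw [← hm, zsmul_eq_mul, mul_comm, mul_inv_cancel_right₀ ha]⟩

lemma range_sum_int_mul_eq_span {ι : Type*} [Fintype ι] (ν : ι → ℝ) :
    Set.range (fun z : ι → ℤ => ∑ i, (z i : ℝ) * ν i) = Submodule.span ℤ (Set.range ν) := by
  ext x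
  simp only [SetLike.mem_coe, Submodule.mem_span_range_iff_exists_fun, zsmul_eq_mul,
    Set.mem_range]

lemma dense_range_sum_int_mul {ι : Type*} [Fintype ι] {ν : ι → ℝ}
    (hirr : ¬ ∃ t : ℝ, t ≠ 0 ∧ ∀ i, ∃ z : ℤ, t * ν i = z) :
    Dense (Set.range fun z : ι → ℤ => ∑ i, (z i : ℝ) * ν i) := by
  rw [range_sum_int_mul_eq_span]
  obtain hdense | ⟨a, ha⟩ := (Submodule.span ℤ (Set.range ν)).toAddSubgroup.dense_or_cyclic
  · exact hdense
  · refine absurd (exists_ne_zero_forall_mul_eq_int_of_mem_zmultiples (a := a) fun i => ?_) hirr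
    rw [zmultiples_eq_closure, ← ha]
    exact Submodule.subset_span ⟨i, rfl⟩

theorem lattice_points_near_irrational_hyperplane_general
    (n : ℕ) (ν : Fin n → ℝ)
    (hirr : ¬ ∃ t : ℝ, t ≠ 0 ∧ ∀ i, ∃ z : ℤ, t * ν i = (z : ℝ))
    (x₀ : Fin n → ℝ) (δ : ℝ) (hδ : 0 < δ) :
    ∃ z : Fin n → ℤ, |∑ i, ((z i : ℝ) - x₀ i) * ν i| ≤ δ := by
  obtain ⟨_, hball, z, rfl⟩ :=
    Metric.dense_iff.mp (dense_range_sum_int_mul hirr) (∑ i, x₀ i * ν i) δ hδ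
  rw [Metric.mem_ball, Real.dist_eq] at hball
  refine ⟨z, ?_⟩
  simpa only [sub_mul, Finset.sum_sub_distrib] using hball.le

/-- If `ν ∈ S^{n-1}` is an irrational direction (no nonzero scalar multiple of
`ν` lies in `ℤⁿ`), then for any hyperplane `H(x₀) = {x : (x−x₀)·ν = 0}` and any
`δ > 0` there is a lattice point `z ∈ ℤⁿ` with `dist(z, H(x₀)) = |(z−x₀)·ν| ≤ δ`. -/
theorem lattice_points_near_irrational_hyperplane
    (n : ℕ) (ν : Fin n → ℝ) (hν : ∑ i, ν i ^ 2 = 1)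
    (hirr : ¬ ∃ t : ℝ, t ≠ 0 ∧ ∀ i, ∃ z : ℤ, t * ν i = (z : ℝ))
    (x₀ : Fin n → ℝ) (δ : ℝ) (hδ : 0 < δ) :
    ∃ z : Fin n → ℤ, |∑ i, ((z i : ℝ) - x₀ i) * ν i| ≤ δ :=
  lattice_points_near_irrational_hyperplane_general n ν hirr x₀ δ hδ
end
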